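/- arXiv:1701.07266 — 8 statements merged into one kernel-verified Lean document; each statement's English description precedes it below -/
import Mathlib

section
/- Let α* be a minimizer of F(α) = ‖α‖₂ + αᵀβ over the probability simplex Δ_n, where 0 ≤ β_1 ≤ β_2 ≤ … ≤ β_n. Then there exists λ > 0 such that α*_i = (λ − β_i)·1{β_i < λ} / Σ_j (λ − β_j)·1{β_j < λ} for all i. -/
set_option maxHeartbeats 1000000 in
theorem stmt_4 (n : ℕ) (hn : 0 < n) (β : Fin n → ℝ)
    (hβ_nonneg : ∀ i, 0 ≤ β i) (hβ_sorted : Monotone β)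
    (a : Fin n → ℝ) (ha_nonneg : ∀ i, 0 ≤ a i) (ha_sum : ∑ i, a i = 1)
    (ha_min : ∀ α : Fin n → ℝ, (∀ i, 0 ≤ α i) → ∑ i, α i = 1 →
      Real.sqrt (∑ i, (a i) ^ 2) + ∑ i, a i * β i ≤
        Real.sqrt (∑ i, (α i) ^ 2) + ∑ i, α i * β i) :
    ∃ l : ℝ, 0 < l ∧ ∀ i, a i =
      (if β i < l then l - β i else 0) / ∑ j, (if β j < l then l - β j else 0) := by
  classical
  set S : ℝ := ∑ i, (a i) ^ 2 with hSdef
  have hS_nonneg : 0 ≤ S := Finset.sum_nonneg fun i _ => sq_nonneg _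
  obtain ⟨j0, hj0⟩ : ∃ j, 0 < a j := by
    by_contra h
    push_neg at h
    have hz : ∀ i ∈ Finset.univ, a i = 0 := fun i _ => le_antisymm (h i) (ha_nonneg i)
    rw [Finset.sum_eq_zero hz] at ha_sum
    norm_num at ha_sum
  have hS_pos : 0 < S := by
    have h1 : (a j0) ^ 2 ≤ S :=
      Finset.single_le_sum (fun i _ => sq_nonneg (a i)) (Finset.mem_univ j0)
    nlinarith [hj0]
  set s : ℝ := Real.sqrt S with hsdef
  have hs_pos : 0 < s := Real.sqrt_pos.mpr hS_pos
  have hs_sq : s ^ 2 = S := Real.sq_sqrt hS_nonneg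
  clear_value S s
  -- KKT conditions
  have kkt : ∀ i j : Fin n, 0 < a j → a j + β j * s ≤ a i + β i * s := by
    intro i j haj
    by_contra hlt
    push_neg at hlt
    have hij : i ≠ j := by rintro rfl; exact lt_irrefl _ hlt
    set c : ℝ := a i - a j with hc
    set d : ℝ := β i - β j with hd
    set ε : ℝ := -(c + d * s) with hε
    have hε_pos : 0 < ε := by
      have : c + d * s < 0 := by nlinarith [hs_pos]
      simp [hε]; linarith
    set t : ℝ := min (min (a j) (s / (|d| + 1))) (ε / (|d ^ 2 - 2| + 1)) with ht
    have ht_pos : 0 < t := by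
      refine lt_min (lt_min haj ?_) ?_ <;> positivity
    have ht_aj : t ≤ a j := le_trans (min_le_left _ _) (min_le_left _ _)
    have ht_s' : t * (|d| + 1) ≤ s := by
      have h1 : t ≤ s / (|d| + 1) := le_trans (min_le_left _ _) (min_le_right _ _)
      have h2 : (0:ℝ) < |d| + 1 := by positivity
      calc t * (|d| + 1) ≤ (s / (|d| + 1)) * (|d| + 1) :=
            mul_le_mul_of_nonneg_right h1 h2.le
        _ = s := by field_simp
    have ht_s : t * |d| < s := by nlinarith
    have ht_ε' : t * (|d ^ 2 - 2| + 1) ≤ ε := by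
      have h1 : t ≤ ε / (|d ^ 2 - 2| + 1) := min_le_right _ _
      have h2 : (0:ℝ) < |d ^ 2 - 2| + 1 := by positivity
      calc t * (|d ^ 2 - 2| + 1) ≤ (ε / (|d ^ 2 - 2| + 1)) * (|d ^ 2 - 2| + 1) :=
            mul_le_mul_of_nonneg_right h1 h2.le
        _ = ε := by field_simp
    have ht_ε : t * |d ^ 2 - 2| < ε := by nlinarith
    have hεeq : c + d * s = -ε := by simp [hε]
    clear_value c d ε t
    -- perturbed point
    set α : Fin n → ℝ := fun k =>
      a k + (if k = i then t else 0) - (if k = j then t else 0) with hα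
    have hα_nonneg : ∀ k, 0 ≤ α k := by
      intro k
      simp only [hα]
      by_cases hki : k = i
      · rw [hki, if_pos rfl, if_neg hij]
        have := ha_nonneg i
        linarith
      · by_cases hkj : k = j
        · rw [hkj, if_neg (Ne.symm hij), if_pos rfl]
          linarith
        · rw [if_neg hki, if_neg hkj]
          have := ha_nonneg k
          linarith
    have hα_sum : ∑ k, α k = 1 := by
      simp only [hα]
      rw [Finset.sum_sub_distrib, Finset.sum_add_distrib, ha_sum,
        Finset.sum_ite_eq' Finset.univ i (fun _ => t),
        Finset.sum_ite_eq' Finset.univ j (fun _ => t)]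
      simp
    have hα_sq : ∑ k, (α k) ^ 2 = S + 2 * t * c + 2 * t ^ 2 := by
      have hpt : ∀ k, (α k) ^ 2 = (a k) ^ 2 +
          ((if k = i then 2 * t * a i + t ^ 2 else 0) +
           (if k = j then t ^ 2 - 2 * t * a j else 0)) := by
        intro k
        simp only [hα]
        by_cases hki : k = i
        · rw [hki, if_pos rfl, if_neg hij, if_pos rfl, if_neg hij]
          ring
        · by_cases hkj : k = j
          · rw [hkj, if_neg (Ne.symm hij), if_pos rfl, if_neg (Ne.symm hij), if_pos rfl]
            ring
          · rw [if_neg hki, if_neg hkj, if_neg hki, if_neg hkj]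
            ring
      rw [Finset.sum_congr rfl fun k _ => hpt k, Finset.sum_add_distrib,
        Finset.sum_add_distrib,
        Finset.sum_ite_eq' Finset.univ i (fun _ => 2 * t * a i + t ^ 2),
        Finset.sum_ite_eq' Finset.univ j (fun _ => t ^ 2 - 2 * t * a j)]
      simp only [Finset.mem_univ, if_true, hc, ← hSdef]
      ring
    have hα_lin : ∑ k, α k * β k = (∑ k, a k * β k) + t * d := by
      have hpt : ∀ k, α k * β k = a k * β k +
          ((if k = i then t * β i else 0) + (if k = j then -(t * β j) else 0)) := by
        intro k
        simp only [hα]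
        by_cases hki : k = i
        · rw [hki, if_pos rfl, if_neg hij, if_pos rfl, if_neg hij]
          ring
        · by_cases hkj : k = j
          · rw [hkj, if_neg (Ne.symm hij), if_pos rfl, if_neg (Ne.symm hij), if_pos rfl]
            ring
          · rw [if_neg hki, if_neg hkj, if_neg hki, if_neg hkj]
            ring
      rw [Finset.sum_congr rfl fun k _ => hpt k, Finset.sum_add_distrib,
        Finset.sum_add_distrib,
        Finset.sum_ite_eq' Finset.univ i (fun _ => t * β i),
        Finset.sum_ite_eq' Finset.univ j (fun _ => -(t * β j))]
      simp only [Finset.mem_univ, if_true, hd]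
      ring
    have hmin := ha_min α hα_nonneg hα_sum
    rw [hα_sq, hα_lin] at hmin
    have hX_nonneg : 0 ≤ S + 2 * t * c + 2 * t ^ 2 := by
      rw [← hα_sq]; exact Finset.sum_nonneg fun k _ => sq_nonneg _
    have hkey : s - t * d ≤ Real.sqrt (S + 2 * t * c + 2 * t ^ 2) := by
      linarith
    have hrhs_pos : 0 < s - t * d := by
      have : t * d ≤ t * |d| := mul_le_mul_of_nonneg_left (le_abs_self d) ht_pos.le
      linarith
    have hsq_ineq : (s - t * d) ^ 2 ≤ S + 2 * t * c + 2 * t ^ 2 := by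
      have h1 : (s - t * d) ^ 2 ≤ (Real.sqrt (S + 2 * t * c + 2 * t ^ 2)) ^ 2 :=
        pow_le_pow_left₀ hrhs_pos.le hkey 2
      rwa [Real.sq_sqrt hX_nonneg] at h1
    -- derive contradiction
    clear hmin hkey hX_nonneg hα_nonneg hα_sum hα_sq hα_lin hα ha_min
    clear α
    have h4 : t * (t * d ^ 2 - 2 * d * s - 2 * c - 2 * t) ≤ 0 := by
      nlinarith [hsq_ineq, hs_sq]
    have h5 : t * d ^ 2 - 2 * d * s - 2 * c - 2 * t ≤ 0 := by
      by_contra hpos'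
      push_neg at hpos'
      nlinarith [mul_pos ht_pos hpos']
    have hmul : t * -(|d ^ 2 - 2|) ≤ t * (d ^ 2 - 2) :=
      mul_le_mul_of_nonneg_left (neg_abs_le _) ht_pos.le
    nlinarith [h5, hεeq, ht_ε, hε_pos, hmul]
  -- extract the value of lambda
  set A : ℝ := ∑ i, a i * β i with hAdef
  have hA_nonneg : 0 ≤ A :=
    Finset.sum_nonneg fun i _ => mul_nonneg (ha_nonneg i) (hβ_nonneg i)
  set l : ℝ := s + A with hldef
  have hl_pos : 0 < l := by positivity
  set C : ℝ := a j0 + β j0 * s with hCdef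
  have key : ∀ i, a i * (a i + β i * s) = a i * C := by
    intro i
    rcases (ha_nonneg i).eq_or_lt with h0 | hpos
    · rw [← h0]; ring
    · have h1 := kkt i j0 hj0
      have h2 := kkt j0 i hpos
      have : a i + β i * s = C := le_antisymm h2 h1
      rw [this]
  have hC : C = s * l := by
    have h1 : ∑ i, a i * (a i + β i * s) = ∑ i, a i * C :=
      Finset.sum_congr rfl fun i _ => key i
    have hL : ∑ i, a i * (a i + β i * s) = S + A * s := by
      have hpt : ∀ i, a i * (a i + β i * s) = (a i) ^ 2 + (a i * β i) * s := fun i => by ring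
      rw [Finset.sum_congr rfl fun i _ => hpt i, Finset.sum_add_distrib,
        ← Finset.sum_mul, ← hSdef, ← hAdef]
    have hR : ∑ i, a i * C = C := by rw [← Finset.sum_mul, ha_sum, one_mul]
    rw [hL, hR] at h1
    rw [← h1, hldef]
    nlinarith [hs_sq]
  have hform : ∀ i, a i = s * (if β i < l then l - β i else 0) := by
    intro i
    rcases (ha_nonneg i).eq_or_lt with h0 | hpos
    · have h := kkt i j0 hj0
      rw [← hCdef, hC, ← h0] at h
      have hge : l ≤ β i := by nlinarith [hs_pos]
      rw [if_neg (not_lt.mpr hge), mul_zero, ← h0]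
    · have h1 := kkt i j0 hj0
      have h2 := kkt j0 i hpos
      have heq : a i + β i * s = s * l := by rw [← hC]; exact le_antisymm h2 h1
      have hβl : β i < l := by nlinarith [hs_pos, hpos]
      rw [if_pos hβl]
      nlinarith [heq]
  have hD : s * (∑ j, if β j < l then l - β j else 0) = 1 := by
    rw [← ha_sum, Finset.mul_sum]
    exact (Finset.sum_congr rfl fun i _ => (hform i).symm)
  have hD_ne : (∑ j, if β j < l then l - β j else 0) ≠ 0 := by
    intro h; rw [h, mul_zero] at hD; norm_num at hD
  refine ⟨l, hl_pos, fun i => ?_⟩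
  rw [eq_div_iff hD_ne, hform i]
  calc (s * (if β i < l then l - β i else 0)) * (∑ j, if β j < l then l - β j else 0)
      = (s * ∑ j, if β j < l then l - β j else 0) * (if β i < l then l - β i else 0) := by
        ring
    _ = (if β i < l then l - β i else 0) := by rw [hD, one_mul]
end

section
/- Suppose α ∈ Δ_n is given by α_i = (λ − β_i)·1{β_i < λ} / A where A = Σ_j (λ − β_j)·1{β_j < λ} > 0, and suppose λ satisfies Σ_{i : β_i < λ} (λ − β_i)² = 1. Then ‖α‖₂ + αᵀβ = λ. -/
theorem stmt_5 (n : ℕ) (β : Fin n → ℝ) (l : ℝ) (A : ℝ)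
    (hA_def : A = ∑ j, (if β j < l then l - β j else 0)) (hA_pos : 0 < A)
    (α : Fin n → ℝ) (hα : ∀ i, α i = (if β i < l then l - β i else 0) / A)
    (hl : ∑ i, (if β i < l then (l - β i) ^ 2 else 0) = 1) :
    Real.sqrt (∑ i, (α i) ^ 2) + ∑ i, α i * β i = l := by
  set f : Fin n → ℝ := fun i => if β i < l then l - β i else 0 with hf
  have hsq : ∑ i, f i ^ 2 = 1 := by
    rw [← hl]
    refine Finset.sum_congr rfl fun i _ => ?_
    by_cases h : β i < l <;> simp [hf, h]
  have hAf : ∑ i, f i = A := hA_def.symm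
  have hfl : ∑ i, f i * (l - β i) = 1 := by
    rw [← hsq]
    refine Finset.sum_congr rfl fun i _ => ?_
    by_cases h : β i < l <;> simp [hf, h, sq]
  have hfb : ∑ i, f i * β i = l * A - 1 := by
    have h2 : (∑ i, f i) * l - ∑ i, f i * β i = 1 := by
      rw [Finset.sum_mul, ← Finset.sum_sub_distrib, ← hfl]
      exact Finset.sum_congr rfl fun i _ => by ring
    rw [hAf] at h2; linarith
  have h1 : ∑ i, (α i) ^ 2 = 1 / A ^ 2 := by
    simp only [hα]
    have hsq' := hsq
    simp only [hf] at hsq'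
    simp only [div_pow]
    rw [← Finset.sum_div, hsq']
  have h2 : ∑ i, α i * β i = (l * A - 1) / A := by
    simp only [hα, div_mul_eq_mul_div]
    rw [← Finset.sum_div, hfb]
  rw [h1, h2]
  rw [one_div, Real.sqrt_inv, Real.sqrt_sq hA_pos.le]
  field_simp
  ring
end

section
/- Let α* minimize F(α) = ‖α‖₂ + αᵀβ over the probability simplex, with 0 ≤ β_1 ≤ β_2 ≤ … ≤ β_n. Then the support of α* is a prefix: there exists k* with 1 ≤ k* ≤ n such that α*_i > 0 for all i ≤ k* and α*_i = 0 for all i > k*. -/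
theorem stmt_6 (n : ℕ) (hn : 0 < n) (β : Fin n → ℝ)
    (hβ_nonneg : ∀ i, 0 ≤ β i) (hβ_sorted : Monotone β)
    (a : Fin n → ℝ) (ha_nonneg : ∀ i, 0 ≤ a i) (ha_sum : ∑ i, a i = 1)
    (ha_min : ∀ α : Fin n → ℝ, (∀ i, 0 ≤ α i) → ∑ i, α i = 1 →
      Real.sqrt (∑ i, (a i) ^ 2) + ∑ i, a i * β i ≤
        Real.sqrt (∑ i, (α i) ^ 2) + ∑ i, α i * β i) :
    ∃ k : ℕ, 1 ≤ k ∧ k ≤ n ∧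
      ∀ i : Fin n, ((i : ℕ) < k → 0 < a i) ∧ (k ≤ (i : ℕ) → a i = 0) := by
  classical
  -- Key: zeros propagate upward
  have key : ∀ i j : Fin n, i ≤ j → a i = 0 → a j = 0 := by
    intro i j hij hai
    rcases eq_or_lt_of_le hij with h | hlt
    · rwa [← h]
    by_contra haj
    have haj' : 0 < a j := lt_of_le_of_ne (ha_nonneg j) (Ne.symm haj)
    have hne : j ≠ i := ne_of_gt hlt
    set α : Fin n → ℝ := fun k => if k = i ∨ k = j then a j / 2 else a k with hα
    have hαi : α i = a j / 2 := by simp [hα]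
    have hαj : α j = a j / 2 := by simp [hα]
    set s : Finset (Fin n) := (Finset.univ.erase i).erase j with hs
    have hsplit : ∀ f : Fin n → ℝ, ∑ k, f k = f i + f j + ∑ k ∈ s, f k := by
      intro f
      have h1 : ∑ k, f k = f i + ∑ k ∈ Finset.univ.erase i, f k :=
        (Finset.add_sum_erase _ f (Finset.mem_univ i)).symm
      have h2 : ∑ k ∈ Finset.univ.erase i, f k = f j + ∑ k ∈ s, f k :=
        (Finset.add_sum_erase _ f (Finset.mem_erase.mpr ⟨hne, Finset.mem_univ j⟩)).symm
      rw [h1, h2]; ring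
    have hαk : ∀ k ∈ s, α k = a k := by
      intro k hk
      have hkj : k ≠ j := (Finset.mem_erase.mp hk).1
      have hki : k ≠ i := (Finset.mem_erase.mp (Finset.mem_erase.mp hk).2).1
      simp [hα, hki, hkj]
    -- nonneg
    have hα_nonneg : ∀ k, 0 ≤ α k := by
      intro k
      by_cases h : k = i ∨ k = j
      · simp [hα, h]; linarith
      · simp [hα, h]; exact ha_nonneg k
    -- sum = 1
    have hsum1 : ∑ k, α k = 1 := by
      rw [hsplit α, hαi, hαj, Finset.sum_congr rfl hαk]
      have := hsplit a
      rw [hai] at this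
      linarith [ha_sum ▸ this, ha_sum]
    -- sum of squares strictly smaller
    have hsq : ∑ k, (α k) ^ 2 < ∑ k, (a k) ^ 2 := by
      have h1 := hsplit (fun k => (α k) ^ 2)
      have h2 := hsplit (fun k => (a k) ^ 2)
      rw [h1, h2, hαi, hαj, hai, Finset.sum_congr rfl (fun k hk => by rw [hαk k hk])]
      have : (a j / 2) ^ 2 + (a j / 2) ^ 2 < 0 ^ 2 + (a j) ^ 2 := by nlinarith
      linarith
    -- beta term not larger
    have hβterm : ∑ k, α k * β k ≤ ∑ k, a k * β k := by
      have h1 := hsplit (fun k => α k * β k)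
      have h2 := hsplit (fun k => a k * β k)
      rw [h1, h2, hαi, hαj, hai, Finset.sum_congr rfl (fun k hk => by rw [hαk k hk])]
      have hββ : β i ≤ β j := hβ_sorted hlt.le
      nlinarith
    have hsqrt : Real.sqrt (∑ k, (α k) ^ 2) < Real.sqrt (∑ k, (a k) ^ 2) :=
      Real.sqrt_lt_sqrt (Finset.sum_nonneg fun k _ => sq_nonneg _) hsq
    have := ha_min α hα_nonneg hsum1
    linarith
  -- define k via Nat.find
  have hQ : ∃ m : ℕ, m = n ∨ ∃ h : m < n, a ⟨m, h⟩ = 0 := ⟨n, Or.inl rfl⟩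
  set k := Nat.find hQ with hk
  have hkspec := Nat.find_spec hQ
  have hkle : k ≤ n := by
    rcases hkspec with h | ⟨h, _⟩
    · exact h.le
    · exact h.le
  have hpos : ∀ i : Fin n, (i : ℕ) < k → 0 < a i := by
    intro i hi
    have := Nat.find_min hQ hi
    push_neg at this
    have h2 := this.2 i.isLt
    have : a i ≠ 0 := by simpa using h2
    exact lt_of_le_of_ne (ha_nonneg i) (Ne.symm this)
  have hzero : ∀ i : Fin n, k ≤ (i : ℕ) → a i = 0 := by
    intro i hi
    rcases hkspec with h | ⟨h, hz⟩
    · have := i.isLt; omega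
    · exact key ⟨k, h⟩ i hi hz
  have hk1 : 1 ≤ k := by
    by_contra h
    push_neg at h
    interval_cases k
    · have : ∀ i : Fin n, a i = 0 := fun i => hzero i (Nat.zero_le _)
      rw [Finset.sum_congr rfl (fun i _ => this i)] at ha_sum
      simp at ha_sum
  exact ⟨k, hk1, hkle, fun i => ⟨hpos i, hzero i⟩⟩
end

section
/- Let α* minimize F(α) = ‖α‖₂ + αᵀβ over Δ_n with β sorted ascending and nonnegative, and let λ = F(α*) be the optimal value. Then for every index i with α*_i > 0 it holds that α*_i / ‖α*‖₂ = λ − β_i, and for every index i with α*_i = 0 it holds that β_i ≥ λ. -/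
private lemma sqrt_tangent {x y : ℝ} (hx : 0 < x) (hy : 0 ≤ y) :
    Real.sqrt y ≤ (x + y) / (2 * Real.sqrt x) := by
  have hsx : 0 < Real.sqrt x := Real.sqrt_pos.mpr hx
  rw [le_div_iff₀ (by positivity)]
  nlinarith [Real.sq_sqrt hx.le, Real.sq_sqrt hy, sq_nonneg (Real.sqrt x - Real.sqrt y),
    Real.sqrt_nonneg y]

private lemma key_lemma (n : ℕ) (β : Fin n → ℝ)
    (a : Fin n → ℝ) (ha_nonneg : ∀ i, 0 ≤ a i) (ha_sum : ∑ i, a i = 1)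
    (ha_min : ∀ α : Fin n → ℝ, (∀ i, 0 ≤ α i) → ∑ i, α i = 1 →
      Real.sqrt (∑ i, (a i) ^ 2) + ∑ i, a i * β i ≤
        Real.sqrt (∑ i, (α i) ^ 2) + ∑ i, α i * β i)
    (i j : Fin n) (hij : i ≠ j) (hi : 0 < a i) :
    a i / Real.sqrt (∑ k, (a k) ^ 2) + β i ≤
      a j / Real.sqrt (∑ k, (a k) ^ 2) + β j := by
  set S : ℝ := ∑ k, (a k) ^ 2 with hS_def
  have hS : 0 < S := by
    apply Finset.sum_pos' (fun k _ => sq_nonneg _)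
    exact ⟨i, Finset.mem_univ i, by positivity⟩
  have hsS : 0 < Real.sqrt S := Real.sqrt_pos.mpr hS
  by_contra hcon
  push_neg at hcon
  set c : ℝ := (a j - a i) / Real.sqrt S + (β j - β i) with hc_def
  have hc : c < 0 := by
    have : a j / Real.sqrt S + β j - (a i / Real.sqrt S + β i) < 0 := by linarith
    have hre : c = a j / Real.sqrt S + β j - (a i / Real.sqrt S + β i) := by
      rw [hc_def]; ring
    linarith [hre ▸ this]
  set t : ℝ := min (a i) (-c * Real.sqrt S / 2) with ht_def
  have ht0 : 0 < t := lt_min hi (half_pos (mul_pos (neg_pos.mpr hc) hsS))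
  have hta : t ≤ a i := min_le_left _ _
  have htc : t / Real.sqrt S ≤ -c / 2 := by
    rw [div_le_iff₀ hsS]
    calc t ≤ -c * Real.sqrt S / 2 := min_le_right _ _
    _ = -c / 2 * Real.sqrt S := by ring
  clear_value c t
  set α : Fin n → ℝ := fun k =>
    a k + (if k = j then t else 0) - (if k = i then t else 0) with hα_def
  have hα_nonneg : ∀ k, 0 ≤ α k := by
    intro k
    simp only [hα_def]
    by_cases hk : k = i
    · simp [hk, hij]; linarith
    · by_cases hk2 : k = j
      · simp [hk2, Ne.symm hij]; linarith [ha_nonneg j]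
      · simp [hk, hk2]; exact ha_nonneg k
  have hα_sum : ∑ k, α k = 1 := by
    simp only [hα_def, Finset.sum_sub_distrib, Finset.sum_add_distrib,
      Finset.sum_ite_eq' Finset.univ, Finset.mem_univ, if_true, ha_sum]
    ring
  have hα_sq : ∑ k, (α k) ^ 2 = S + 2 * t * (a j - a i) + 2 * t ^ 2 := by
    have : ∀ k, (α k) ^ 2 = (a k) ^ 2 + (if k = j then 2 * t * a k + t ^ 2 else 0)
        + (if k = i then -(2 * t * a k) + t ^ 2 else 0) := by
      intro k
      simp only [hα_def]
      by_cases hk : k = i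
      · simp [hk, hij]; ring
      · by_cases hk2 : k = j
        · simp [hk2, Ne.symm hij]; ring
        · simp [hk, hk2]
    rw [Finset.sum_congr rfl (fun k _ => this k)]
    simp only [Finset.sum_add_distrib, Finset.sum_ite_eq' Finset.univ,
      Finset.mem_univ, if_true]
    ring
  have hα_β : ∑ k, α k * β k = (∑ k, a k * β k) + t * (β j - β i) := by
    have : ∀ k, α k * β k = a k * β k + (if k = j then t * β k else 0)
        + (if k = i then -(t * β k) else 0) := by
      intro k
      simp only [hα_def]
      by_cases hk : k = i
      · simp [hk, hij]; ring
      · by_cases hk2 : k = j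
        · simp [hk2, Ne.symm hij]; ring
        · simp [hk, hk2]
    rw [Finset.sum_congr rfl (fun k _ => this k)]
    simp only [Finset.sum_add_distrib, Finset.sum_ite_eq' Finset.univ,
      Finset.mem_univ, if_true]
    ring
  have hmin := ha_min α hα_nonneg hα_sum
  rw [hα_sq, hα_β] at hmin
  have hy : (0:ℝ) ≤ S + 2 * t * (a j - a i) + 2 * t ^ 2 := by
    have := Finset.sum_nonneg (fun k (_ : k ∈ Finset.univ) => sq_nonneg (α k))
    rw [hα_sq] at this; exact this
  have hub : Real.sqrt (S + 2 * t * (a j - a i) + 2 * t ^ 2) ≤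
      Real.sqrt S + t * ((a j - a i) + t) / Real.sqrt S := by
    have h1 := sqrt_tangent hS hy
    have h2 : (S + (S + 2 * t * (a j - a i) + 2 * t ^ 2)) / (2 * Real.sqrt S)
        = Real.sqrt S + t * ((a j - a i) + t) / Real.sqrt S := by
      have hSS : Real.sqrt S * Real.sqrt S = S := Real.mul_self_sqrt hS.le
      field_simp
      nlinarith [hSS]
    linarith [h2 ▸ h1]
  have hfin : 0 ≤ t * ((a j - a i) + t) / Real.sqrt S + t * (β j - β i) := by
    linarith
  have heq : t * ((a j - a i) + t) / Real.sqrt S + t * (β j - β i)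
      = t * (c + t / Real.sqrt S) := by
    rw [hc_def]; field_simp; ring
  rw [heq] at hfin
  have hneg : c + t / Real.sqrt S < 0 := by linarith
  nlinarith [mul_pos ht0 (show (0:ℝ) < -(c + t / Real.sqrt S) by linarith)]

theorem stmt_13 (n : ℕ) (hn : 0 < n) (β : Fin n → ℝ)
    (hβ_nonneg : ∀ i, 0 ≤ β i) (hβ_sorted : Monotone β)
    (a : Fin n → ℝ) (ha_nonneg : ∀ i, 0 ≤ a i) (ha_sum : ∑ i, a i = 1)
    (ha_min : ∀ α : Fin n → ℝ, (∀ i, 0 ≤ α i) → ∑ i, α i = 1 →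
      Real.sqrt (∑ i, (a i) ^ 2) + ∑ i, a i * β i ≤
        Real.sqrt (∑ i, (α i) ^ 2) + ∑ i, α i * β i) :
    ∀ i : Fin n,
      (0 < a i → a i / Real.sqrt (∑ j, (a j) ^ 2) =
        (Real.sqrt (∑ j, (a j) ^ 2) + ∑ j, a j * β j) - β i) ∧
      (a i = 0 → (Real.sqrt (∑ j, (a j) ^ 2) + ∑ j, a j * β j) ≤ β i) := by
  set S : ℝ := ∑ k, (a k) ^ 2 with hS_def
  -- there is a support element
  obtain ⟨i0, -, hi0⟩ : ∃ i ∈ Finset.univ, 0 < a i := by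
    by_contra h
    push_neg at h
    have : ∑ k, a k = 0 := Finset.sum_eq_zero fun k _ =>
      le_antisymm (by simpa using h k (Finset.mem_univ k)) (ha_nonneg k)
    rw [ha_sum] at this; norm_num at this
  have hS : 0 < S := by
    apply Finset.sum_pos' (fun k _ => sq_nonneg _)
    exact ⟨i0, Finset.mem_univ i0, by positivity⟩
  have hsS : 0 < Real.sqrt S := Real.sqrt_pos.mpr hS
  have key : ∀ i j : Fin n, 0 < a i →
      a i / Real.sqrt S + β i ≤ a j / Real.sqrt S + β j := by
    intro i j hi
    by_cases hij : i = j
    · subst hij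
      exact le_rfl
    · exact key_lemma n β a ha_nonneg ha_sum ha_min i j hij hi
  -- on support the quantity is constant, equal to that at i0
  set μ : ℝ := a i0 / Real.sqrt S + β i0 with hμ_def
  have hconst : ∀ k, 0 < a k → a k / Real.sqrt S + β k = μ :=
    fun k hk => le_antisymm (key k i0 hk) (key i0 k hi0)
  have hmu : μ = Real.sqrt S + ∑ k, a k * β k := by
    have h1 : ∑ k, a k * (a k / Real.sqrt S + β k) = μ := by
      have : ∀ k, a k * (a k / Real.sqrt S + β k) = a k * μ := by
        intro k
        rcases (ha_nonneg k).lt_or_eq with hk | hk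
        · rw [hconst k hk]
        · rw [← hk]; ring
      rw [Finset.sum_congr rfl (fun k _ => this k), ← Finset.sum_mul, ha_sum, one_mul]
    have h2 : ∑ k, a k * (a k / Real.sqrt S + β k)
        = S / Real.sqrt S + ∑ k, a k * β k := by
      simp only [mul_add, Finset.sum_add_distrib]
      congr 1
      rw [eq_div_iff hsS.ne', Finset.sum_mul, hS_def]
      exact Finset.sum_congr rfl fun k _ => by
        have hsS' : Real.sqrt (∑ x, a x ^ 2) ≠ 0 := hsS.ne'
        field_simp
    have h3 : S / Real.sqrt S = Real.sqrt S := by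
      rw [eq_comm, eq_div_iff hsS.ne', Real.mul_self_sqrt hS.le]
    rw [h2, h3] at h1
    exact h1.symm
  intro i
  constructor
  · intro hi
    have := hconst i hi
    rw [hmu] at this
    linarith
  · intro hi
    have hii0 : i0 ≠ i := fun h => by rw [h] at hi0; exact absurd hi (by linarith)
    have h1 := key i0 i hi0
    rw [hconst i0 hi0, hmu, hi] at h1
    simpa using h1
end

section
/- Greedy stopping is optimal: with λ_k defined as the minimum of ‖α‖₂ + αᵀβ over Δ_n^(k) (β sorted ascending, nonnegative), if λ_{k₀} ≤ β_{k₀+1} for some k₀, then λ_k = λ_{k₀} for all k ≥ k₀; i.e., the first index at which λ_k ≤ β_{k+1} yields the global minimum over the full simplex. -/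
theorem stmt_15 (n : ℕ) (β : Fin n → ℝ)
    (hβ_nonneg : ∀ i, 0 ≤ β i) (hβ_sorted : Monotone β)
    (l : ℕ → ℝ)
    (hl : ∀ k, 1 ≤ k → k ≤ n →
      IsLeast ((fun α : Fin n → ℝ => Real.sqrt (∑ i, (α i) ^ 2) + ∑ i, α i * β i) ''
        {α | (∀ i, 0 ≤ α i) ∧ (∑ i, α i = 1) ∧ ∀ i : Fin n, k ≤ (i : ℕ) → α i = 0}) (l k))
    (k₀ : ℕ) (hk₀1 : 1 ≤ k₀) (hk₀n : k₀ < n)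
    (hstop : l k₀ ≤ β ⟨k₀, hk₀n⟩) :
    ∀ k, k₀ ≤ k → k ≤ n → l k = l k₀ := by
  intro k hk₀k hkn
  have hk1 : 1 ≤ k := le_trans hk₀1 hk₀k
  obtain ⟨hlk_mem, hlk_lb⟩ := hl k hk1 hkn
  obtain ⟨hlk₀_mem, hlk₀_lb⟩ := hl k₀ hk₀1 (le_of_lt hk₀n)
  -- first: l k ≤ l k₀
  have h1 : l k ≤ l k₀ := by
    obtain ⟨α, ⟨ha1, ha2, ha3⟩, ha4⟩ := hlk₀_mem
    exact ha4 ▸ hlk_lb ⟨α, ⟨ha1, ha2, fun i hi => ha3 i (le_trans hk₀k hi)⟩, rfl⟩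
  -- second: l k₀ ≤ l k
  obtain ⟨α, ⟨hαnn, hαsum, hαzero⟩, hαval⟩ := hlk_mem
  set S : Finset (Fin n) := Finset.univ.filter (fun i => (i : ℕ) < k₀) with hS
  set t : ℝ := ∑ i ∈ S, α i with ht
  have ht0 : 0 ≤ t := Finset.sum_nonneg (fun i _ => hαnn i)
  have hcompl : ∀ i : Fin n, i ∈ Sᶜ ↔ k₀ ≤ (i : ℕ) := by
    intro i; simp [hS, not_lt]
  have hβk₀ : ∀ i : Fin n, i ∈ Sᶜ → β ⟨k₀, hk₀n⟩ ≤ β i := by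
    intro i hi
    exact hβ_sorted (show (⟨k₀, hk₀n⟩ : Fin n) ≤ i from (hcompl i).mp hi)
  have hsumc : ∑ i ∈ Sᶜ, α i = 1 - t := by
    have := Finset.sum_add_sum_compl S α
    rw [hαsum] at this
    linarith
  have htail : (1 - t) * β ⟨k₀, hk₀n⟩ ≤ ∑ i ∈ Sᶜ, α i * β i := by
    calc (1 - t) * β ⟨k₀, hk₀n⟩ = ∑ i ∈ Sᶜ, α i * β ⟨k₀, hk₀n⟩ := by
          rw [← Finset.sum_mul, hsumc]
      _ ≤ ∑ i ∈ Sᶜ, α i * β i :=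
          Finset.sum_le_sum (fun i hi => mul_le_mul_of_nonneg_left (hβk₀ i hi) (hαnn i))
  have ht1 : t ≤ 1 := by
    have : 0 ≤ ∑ i ∈ Sᶜ, α i := Finset.sum_nonneg (fun i _ => hαnn i)
    linarith [hsumc]
  have hsq_nonneg : (0:ℝ) ≤ ∑ i, (α i) ^ 2 := Finset.sum_nonneg (fun i _ => sq_nonneg _)
  have hsqS : ∑ i ∈ S, (α i) ^ 2 ≤ ∑ i, (α i) ^ 2 :=
    Finset.sum_le_sum_of_subset_of_nonneg (Finset.subset_univ S) (fun i _ _ => sq_nonneg _)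
  have key : l k₀ ≤ Real.sqrt (∑ i, (α i) ^ 2) + ∑ i, α i * β i := by
    by_cases hts : t = 0
    · -- all mass beyond k₀
      have hz : ∀ i ∈ S, α i = 0 :=
        (Finset.sum_eq_zero_iff_of_nonneg (fun i _ => hαnn i)).mp (by rw [← ht]; exact hts)
      have hsum_split : ∑ i, α i * β i = ∑ i ∈ S, α i * β i + ∑ i ∈ Sᶜ, α i * β i :=
        (Finset.sum_add_sum_compl S _).symm
      have hS0 : ∑ i ∈ S, α i * β i = 0 :=
        Finset.sum_eq_zero (fun i hi => by rw [hz i hi, zero_mul])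
      have : β ⟨k₀, hk₀n⟩ ≤ ∑ i, α i * β i := by
        rw [hsum_split, hS0]
        have := htail
        rw [hts] at this
        linarith
      have := Real.sqrt_nonneg (∑ i, (α i) ^ 2)
      linarith
    · have htpos : 0 < t := lt_of_le_of_ne ht0 (Ne.symm hts)
      set γ : Fin n → ℝ := fun i => if (i : ℕ) < k₀ then α i / t else 0 with hγ
      have hγmem : γ ∈ {α : Fin n → ℝ | (∀ i, 0 ≤ α i) ∧ (∑ i, α i = 1) ∧
          ∀ i : Fin n, k₀ ≤ (i : ℕ) → α i = 0} := by
        refine ⟨fun i => ?_, ?_, fun i hi => ?_⟩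
        · by_cases h : (i : ℕ) < k₀
          · simp only [hγ, h, if_true]; exact div_nonneg (hαnn i) ht0
          · simp [hγ, h]
        · have : ∑ i, γ i = ∑ i ∈ S, α i / t := by
            rw [← Finset.sum_filter]
          rw [this, ← Finset.sum_div, ← ht, div_self hts]
        · simp [hγ, not_lt.mpr hi]
      have hle : l k₀ ≤ Real.sqrt (∑ i, (γ i) ^ 2) + ∑ i, γ i * β i :=
        hlk₀_lb ⟨γ, hγmem, rfl⟩
      have hγsq : ∑ i, (γ i) ^ 2 = (∑ i ∈ S, (α i) ^ 2) / t ^ 2 := by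
        rw [Finset.sum_div, ← Finset.sum_filter_add_sum_filter_not Finset.univ
          (fun i : Fin n => (i : ℕ) < k₀)]
        have h1 : ∑ i ∈ Finset.univ.filter (fun i : Fin n => ¬ (i : ℕ) < k₀), (γ i) ^ 2 = 0 :=
          Finset.sum_eq_zero (fun i hi => by
            simp only [Finset.mem_filter] at hi
            simp [hγ, hi.2])
        rw [h1, add_zero]
        refine Finset.sum_congr rfl (fun i hi => ?_)
        simp only [hS, Finset.mem_filter] at hi
        simp [hγ, hi.2, div_pow]
      have hγβ : ∑ i, γ i * β i = (∑ i ∈ S, α i * β i) / t := by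
        rw [Finset.sum_div, ← Finset.sum_filter_add_sum_filter_not Finset.univ
          (fun i : Fin n => (i : ℕ) < k₀)]
        have h1 : ∑ i ∈ Finset.univ.filter (fun i : Fin n => ¬ (i : ℕ) < k₀), γ i * β i = 0 :=
          Finset.sum_eq_zero (fun i hi => by
            simp only [Finset.mem_filter] at hi
            simp [hγ, hi.2])
        rw [h1, add_zero]
        refine Finset.sum_congr rfl (fun i hi => ?_)
        simp only [hS, Finset.mem_filter] at hi
        simp [hγ, hi.2]
        ring
      have hsqS_nonneg : (0:ℝ) ≤ ∑ i ∈ S, (α i) ^ 2 :=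
        Finset.sum_nonneg (fun i _ => sq_nonneg _)
      have hsqrt : Real.sqrt ((∑ i ∈ S, (α i) ^ 2) / t ^ 2)
          = Real.sqrt (∑ i ∈ S, (α i) ^ 2) / t := by
        rw [Real.sqrt_div hsqS_nonneg, Real.sqrt_sq ht0]
      have hmul : t * l k₀ ≤ Real.sqrt (∑ i ∈ S, (α i) ^ 2) + ∑ i ∈ S, α i * β i := by
        rw [hγsq, hγβ, hsqrt, ← add_div] at hle
        have := (le_div_iff₀ htpos).mp hle
        linarith
      have hsqrtle : Real.sqrt (∑ i ∈ S, (α i) ^ 2) ≤ Real.sqrt (∑ i, (α i) ^ 2) :=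
        Real.sqrt_le_sqrt hsqS
      have htail2 : (1 - t) * l k₀ ≤ ∑ i ∈ Sᶜ, α i * β i :=
        le_trans (mul_le_mul_of_nonneg_left hstop (by linarith)) htail
      have hsum_split : ∑ i, α i * β i = ∑ i ∈ S, α i * β i + ∑ i ∈ Sᶜ, α i * β i :=
        (Finset.sum_add_sum_compl S _).symm
      nlinarith [hmul, hsqrtle, htail2, hsum_split]
  have h2 : l k₀ ≤ l k := hαval ▸ key
  linarith
end

section
/- Let k* be the size of the support of the minimizer of ‖α‖₂ + αᵀβ over Δ_n (β sorted ascending, nonnegative), and let λ_k be the constrained optimal values over Δ_n^(k). Then for every k < k*, λ_k > β_{k+1}. -/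
theorem stmt_16 (n : ℕ) (β : Fin n → ℝ)
    (hβ_nonneg : ∀ i, 0 ≤ β i) (hβ_sorted : Monotone β)
    (a : Fin n → ℝ) (ha_nonneg : ∀ i, 0 ≤ a i) (ha_sum : ∑ i, a i = 1)
    (ha_min : ∀ α : Fin n → ℝ, (∀ i, 0 ≤ α i) → ∑ i, α i = 1 →
      Real.sqrt (∑ i, (a i) ^ 2) + ∑ i, a i * β i ≤
        Real.sqrt (∑ i, (α i) ^ 2) + ∑ i, α i * β i)
    (kstar : ℕ) (hkstar : kstar ≤ n)
    (hsupp : ∀ i : Fin n, 0 < a i ↔ (i : ℕ) < kstar)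
    (l : ℕ → ℝ)
    (hl : ∀ k, 1 ≤ k → k ≤ n →
      IsLeast ((fun α : Fin n → ℝ => Real.sqrt (∑ i, (α i) ^ 2) + ∑ i, α i * β i) ''
        {α | (∀ i, 0 ≤ α i) ∧ (∑ i, α i = 1) ∧ ∀ i : Fin n, k ≤ (i : ℕ) → α i = 0}) (l k)) :
    ∀ k (hk : k < kstar), 1 ≤ k → β ⟨k, lt_of_lt_of_le hk hkstar⟩ < l k := by
  intro k hk hk1
  set kk : Fin n := ⟨k, lt_of_lt_of_le hk hkstar⟩ with hkk
  by_contra hcon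
  push_neg at hcon
  obtain ⟨hmem, _⟩ := hl k hk1 (le_trans (le_of_lt hk) hkstar)
  obtain ⟨α, ⟨hα_nn, hα_sum, hα_supp⟩, hα_val⟩ := hmem
  set c : Fin n → ℝ := fun i => if (i : ℕ) < k then a i else 0 with hc
  set m : ℝ := 1 - ∑ i, c i with hm
  have hc_nn : ∀ i, 0 ≤ c i := fun i => by
    by_cases h : (i : ℕ) < k <;> simp [hc, h, ha_nonneg i]
  have hac_nn : ∀ i, (0 : ℝ) ≤ a i - c i := fun i => by
    by_cases h : (i : ℕ) < k <;> simp [hc, h, ha_nonneg i]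
  have hm_eq : m = ∑ i, (a i - c i) := by
    rw [hm, Finset.sum_sub_distrib, ha_sum]
  have ha_kk : 0 < a kk := (hsupp kk).mpr hk
  have hc_kk : c kk = 0 := by simp [hc, hkk]
  have hm_pos : 0 < m := by
    rw [hm_eq]
    calc (0:ℝ) < a kk - c kk := by rw [hc_kk]; linarith
      _ ≤ ∑ i, (a i - c i) :=
        Finset.single_le_sum (fun i _ => hac_nn i) (Finset.mem_univ kk)
  set b : Fin n → ℝ := fun i => c i + m * α i with hb
  have hb_nn : ∀ i, 0 ≤ b i := fun i =>
    add_nonneg (hc_nn i) (mul_nonneg hm_pos.le (hα_nn i))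
  have hb_sum : ∑ i, b i = 1 := by
    simp only [hb, Finset.sum_add_distrib, ← Finset.mul_sum, hα_sum]
    linarith
  have hL := ha_min b hb_nn hb_sum
  set A : ℝ := Real.sqrt (∑ i, c i ^ 2) with hA
  set B : ℝ := Real.sqrt (∑ i, α i ^ 2) with hB
  have hA_nn : 0 ≤ A := Real.sqrt_nonneg _
  have hB_nn : 0 ≤ B := Real.sqrt_nonneg _
  have hcsum_nn : 0 ≤ ∑ i, c i ^ 2 :=
    Finset.sum_nonneg fun i _ => sq_nonneg _
  have hαsum_nn : 0 ≤ ∑ i, α i ^ 2 :=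
    Finset.sum_nonneg fun i _ => sq_nonneg _
  have hA_sq : A ^ 2 = ∑ i, c i ^ 2 := Real.sq_sqrt hcsum_nn
  have hB_sq : B ^ 2 = ∑ i, α i ^ 2 := Real.sq_sqrt hαsum_nn
  -- Cauchy–Schwarz
  have hcs2 : (∑ i, c i * α i) ^ 2 ≤ (∑ i, c i ^ 2) * ∑ i, α i ^ 2 :=
    Finset.sum_mul_sq_le_sq_mul_sq Finset.univ c α
  have hCS : ∑ i, c i * α i ≤ A * B := by
    have h1 : ∑ i, c i * α i ≤ Real.sqrt ((∑ i, c i ^ 2) * ∑ i, α i ^ 2) := by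
      rw [← Real.sqrt_sq (Finset.sum_nonneg fun i _ => mul_nonneg (hc_nn i) (hα_nn i))]
      exact Real.sqrt_le_sqrt hcs2
    rwa [Real.sqrt_mul hcsum_nn] at h1
  -- Minkowski-type bound on the norm of b
  have hb2 : ∑ i, b i ^ 2
      = (∑ i, c i ^ 2) + 2 * m * (∑ i, c i * α i) + m ^ 2 * ∑ i, α i ^ 2 := by
    have : ∀ i : Fin n, b i ^ 2 = c i ^ 2 + 2 * m * (c i * α i) + m ^ 2 * α i ^ 2 := by
      intro i; simp only [hb]; ring
    simp only [this, Finset.sum_add_distrib, ← Finset.mul_sum]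
  have hnorm : Real.sqrt (∑ i, b i ^ 2) ≤ A + m * B := by
    rw [← Real.sqrt_sq (by positivity : (0:ℝ) ≤ A + m * B)]
    apply Real.sqrt_le_sqrt
    have hexp : (A + m * B) ^ 2 = A ^ 2 + 2 * m * (A * B) + m ^ 2 * B ^ 2 := by ring
    rw [hexp, hA_sq, hB_sq, hb2]
    have := mul_le_mul_of_nonneg_left hCS (by positivity : (0:ℝ) ≤ 2 * m)
    linarith
  have hlin : ∑ i, b i * β i = (∑ i, c i * β i) + m * ∑ i, α i * β i := by
    have : ∀ i : Fin n, b i * β i = c i * β i + m * (α i * β i) := by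
      intro i; simp only [hb]; ring
    simp only [this, Finset.sum_add_distrib, ← Finset.mul_sum]
  -- monotonicity of β
  have hbeta : (∑ i, c i * β i) + m * β kk ≤ ∑ i, a i * β i := by
    have hpt : ∀ i ∈ Finset.univ, (a i - c i) * β kk ≤ (a i - c i) * β i := by
      intro i _
      by_cases h : (i : ℕ) < k
      · simp [hc, h]
      · have hki : kk ≤ i := by
          rw [Fin.le_def]; exact le_of_not_gt h
        exact mul_le_mul_of_nonneg_left (hβ_sorted hki) (hac_nn i)
    have hsum := Finset.sum_le_sum hpt
    rw [← Finset.sum_mul, ← hm_eq] at hsum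
    have : ∑ i, (a i - c i) * β i = (∑ i, a i * β i) - ∑ i, c i * β i := by
      rw [← Finset.sum_sub_distrib]; congr 1; funext i; ring
    linarith [this ▸ hsum]
  -- ∑ c² < ∑ a²
  have hsq_lt : ∑ i, c i ^ 2 < ∑ i, a i ^ 2 := by
    apply Finset.sum_lt_sum
    · intro i _
      by_cases h : (i : ℕ) < k
      · have hci : c i = a i := by simp [hc, h]
        rw [hci]
      · have hci : c i = 0 := by simp [hc, h]
        rw [hci]; simpa using sq_nonneg (a i)
    · exact ⟨kk, Finset.mem_univ kk, by rw [hc_kk]; nlinarith [ha_kk]⟩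
  have hAlt : A < Real.sqrt (∑ i, a i ^ 2) := Real.sqrt_lt_sqrt hcsum_nn hsq_lt
  -- final chain
  have hval : B + ∑ i, α i * β i = l k := hα_val
  have hmono : m * l k ≤ m * β kk := mul_le_mul_of_nonneg_left hcon hm_pos.le
  rw [hlin] at hL
  have hmul : m * B + m * (∑ i, α i * β i) = m * l k := by
    rw [← hval]; ring
  linarith [hL, hnorm, hbeta, hAlt, hmono, hmul]
end

section
/- Let α* minimize ‖α‖₂ + αᵀβ over Δ_n^(k) = {α ∈ Δ_n : α_i = 0 for i > k}, where β is sorted ascending and nonnegative, and suppose the optimizer has full support on {1,…,k̄} with k̄ < k. Then α* is also a global minimizer of ‖α‖₂ + αᵀβ over the whole simplex Δ_n, provided β_{k̄+1} ≥ λ where λ is the optimal value. -/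
theorem stmt_17 (n : ℕ) (β : Fin n → ℝ)
    (hβ_nonneg : ∀ i, 0 ≤ β i) (hβ_sorted : Monotone β)
    (k : ℕ) (hkn : k ≤ n)
    (a : Fin n → ℝ) (ha_nonneg : ∀ i, 0 ≤ a i) (ha_sum : ∑ i, a i = 1)
    (ha_zero : ∀ i : Fin n, k ≤ (i : ℕ) → a i = 0)
    (ha_min : ∀ α : Fin n → ℝ, (∀ i, 0 ≤ α i) → ∑ i, α i = 1 →
      (∀ i : Fin n, k ≤ (i : ℕ) → α i = 0) →
      Real.sqrt (∑ i, (a i) ^ 2) + ∑ i, a i * β i ≤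
        Real.sqrt (∑ i, (α i) ^ 2) + ∑ i, α i * β i)
    (kbar : ℕ) (hkbar : kbar < k)
    (hsupp : ∀ i : Fin n, 0 < a i ↔ (i : ℕ) < kbar)
    (hkbarn : kbar < n)
    (hlam : Real.sqrt (∑ i, (a i) ^ 2) + ∑ i, a i * β i ≤ β ⟨kbar, hkbarn⟩) :
    ∀ α : Fin n → ℝ, (∀ i, 0 ≤ α i) → ∑ i, α i = 1 →
      Real.sqrt (∑ i, (a i) ^ 2) + ∑ i, a i * β i ≤
        Real.sqrt (∑ i, (α i) ^ 2) + ∑ i, α i * β i := by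
  intro α hα_nonneg hα_sum
  set L : ℝ := Real.sqrt (∑ i, (a i) ^ 2) + ∑ i, a i * β i with hLdef
  set F : Finset (Fin n) := Finset.univ.filter (fun i => (i : ℕ) < kbar) with hF
  set G : Finset (Fin n) := Finset.univ.filter (fun i => ¬ (i : ℕ) < kbar) with hG
  have hsplit : ∀ g : Fin n → ℝ, (∑ i ∈ F, g i) + (∑ i ∈ G, g i) = ∑ i, g i := by
    intro g
    exact Finset.sum_filter_add_sum_filter_not Finset.univ _ g
  set s : ℝ := ∑ i ∈ F, α i with hs
  set t : ℝ := ∑ i ∈ G, α i with ht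
  have hs_nonneg : 0 ≤ s := Finset.sum_nonneg fun i _ => hα_nonneg i
  have ht_nonneg : 0 ≤ t := Finset.sum_nonneg fun i _ => hα_nonneg i
  have hst : s + t = 1 := by rw [hs, ht, hsplit]; exact hα_sum
  -- tail bound : β kbar * t ≤ ∑ i ∈ G, α i * β i
  have htail : β ⟨kbar, hkbarn⟩ * t ≤ ∑ i ∈ G, α i * β i := by
    rw [ht, Finset.mul_sum]
    apply Finset.sum_le_sum
    intro i hi
    rw [hG, Finset.mem_filter] at hi
    have hki : (⟨kbar, hkbarn⟩ : Fin n) ≤ i := by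
      simpa [Fin.le_def] using Nat.le_of_not_lt hi.2
    have := hβ_sorted hki
    rw [mul_comm]
    exact mul_le_mul_of_nonneg_left this (hα_nonneg i)
  have htailL : L * t ≤ ∑ i ∈ G, α i * β i :=
    le_trans (mul_le_mul_of_nonneg_right hlam ht_nonneg) htail
  -- sqrt over head ≤ sqrt over all
  have hsq_head : Real.sqrt (∑ i ∈ F, (α i) ^ 2) ≤ Real.sqrt (∑ i, (α i) ^ 2) := by
    apply Real.sqrt_le_sqrt
    rw [← hsplit (fun i => (α i) ^ 2)]
    have : 0 ≤ ∑ i ∈ G, (α i) ^ 2 := Finset.sum_nonneg fun i _ => sq_nonneg _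
    linarith
  have hsum_split : ∑ i, α i * β i = (∑ i ∈ F, α i * β i) + (∑ i ∈ G, α i * β i) :=
    (hsplit (fun i => α i * β i)).symm
  rcases eq_or_lt_of_le hs_nonneg with hs0 | hs0
  · -- s = 0 : all mass on tail
    have ht1 : t = 1 := by linarith
    have hFzero : ∀ i ∈ F, α i * β i = 0 := by
      intro i hi
      have : α i = 0 := by
        have := (Finset.sum_eq_zero_iff_of_nonneg (fun i _ => hα_nonneg i)).mp hs0.symm i hi
        exact this
      simp [this]
    have hLβ : L ≤ β ⟨kbar, hkbarn⟩ := hlam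
    have h1 : L ≤ ∑ i ∈ G, α i * β i := by
      have := htailL
      rw [ht1, mul_one] at this
      exact this
    have hFz : ∑ i ∈ F, α i * β i = 0 := Finset.sum_eq_zero hFzero
    have hsq_nonneg : 0 ≤ Real.sqrt (∑ i, (α i) ^ 2) := Real.sqrt_nonneg _
    rw [hsum_split, hFz]
    linarith
  · -- s > 0 : rescale head
    set α' : Fin n → ℝ := fun i => if (i : ℕ) < kbar then α i / s else 0 with hα'
    have h1 : ∀ i, 0 ≤ α' i := by
      intro i
      rw [hα']
      dsimp only
      split
      · exact div_nonneg (hα_nonneg i) hs_nonneg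
      · exact le_refl 0
    have h2 : ∑ i, α' i = 1 := by
      rw [hα']
      rw [← Finset.sum_filter]
      rw [← Finset.sum_div, ← hF, ← hs]
      exact div_self (ne_of_gt hs0)
    have h3 : ∀ i : Fin n, k ≤ (i : ℕ) → α' i = 0 := by
      intro i hi
      rw [hα']
      dsimp only
      rw [if_neg]
      omega
    have key := ha_min α' h1 h2 h3
    have hptw1 : ∀ i : Fin n, (α' i) ^ 2 = if (i : ℕ) < kbar then (α i) ^ 2 / s ^ 2 else 0 := by
      intro i
      rw [hα']
      dsimp only
      split
      · rw [div_pow]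
      · simp
    have hptw2 : ∀ i : Fin n, α' i * β i = if (i : ℕ) < kbar then α i * β i / s else 0 := by
      intro i
      rw [hα']
      dsimp only
      split
      · ring
      · simp
    have hsq' : ∑ i, (α' i) ^ 2 = (∑ i ∈ F, (α i) ^ 2) / s ^ 2 := by
      calc ∑ i, (α' i) ^ 2
          = ∑ i : Fin n, (if (i : ℕ) < kbar then (α i) ^ 2 / s ^ 2 else 0) :=
            Finset.sum_congr rfl (fun i _ => hptw1 i)
        _ = ∑ i ∈ F, (α i) ^ 2 / s ^ 2 := (Finset.sum_filter _ _).symm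
        _ = (∑ i ∈ F, (α i) ^ 2) / s ^ 2 := by rw [Finset.sum_div]
    have hsb' : ∑ i, α' i * β i = (∑ i ∈ F, α i * β i) / s := by
      calc ∑ i, α' i * β i
          = ∑ i : Fin n, (if (i : ℕ) < kbar then α i * β i / s else 0) :=
            Finset.sum_congr rfl (fun i _ => hptw2 i)
        _ = ∑ i ∈ F, α i * β i / s := (Finset.sum_filter _ _).symm
        _ = (∑ i ∈ F, α i * β i) / s := by rw [Finset.sum_div]
    have hsqrt' : Real.sqrt (∑ i, (α' i) ^ 2) = Real.sqrt (∑ i ∈ F, (α i) ^ 2) / s := by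
      rw [hsq', Real.sqrt_div (Finset.sum_nonneg fun i _ => sq_nonneg _),
        Real.sqrt_sq hs_nonneg]
    rw [hsqrt', hsb', ← add_div, le_div_iff₀ hs0] at key
    -- key : L * s ≤ sqrt (∑ F α^2) + ∑ F α β
    rw [hsum_split]
    have := hsq_head
    have hL1 : L * s + L * t = L := by rw [← mul_add, hst, mul_one]
    linarith
end

section
/- Let 0 ≤ β_1 ≤ … ≤ β_n and for each k let λ_k = (1/k)·(S_k + √(k + S_k² − k·Q_k)) where S_k = Σ_{i=1}^k β_i and Q_k = Σ_{i=1}^k β_i², assuming the discriminant is nonnegative. If λ_k > β_{k+1}, then the discriminant at step k+1 is also nonnegative, i.e., (k+1) + S_{k+1}² − (k+1)·Q_{k+1} ≥ 0, so λ_{k+1} is well-defined (real). -/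
theorem stmt_19 (n : ℕ) (β : Fin n → ℝ)
    (hβ_nonneg : ∀ i, 0 ≤ β i) (hβ_sorted : Monotone β)
    (k : ℕ) (hk1 : 1 ≤ k) (hkn : k < n)
    (S Q : ℕ → ℝ)
    (hS : ∀ m, S m = ∑ i ∈ Finset.univ.filter (fun i : Fin n => (i : ℕ) < m), β i)
    (hQ : ∀ m, Q m = ∑ i ∈ Finset.univ.filter (fun i : Fin n => (i : ℕ) < m), (β i) ^ 2)
    (hdisc : 0 ≤ (k : ℝ) + (S k) ^ 2 - k * Q k)
    (lk : ℝ)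
    (hlk : lk = (1 / k) * (S k + Real.sqrt ((k : ℝ) + (S k) ^ 2 - k * Q k)))
    (hloop : β ⟨k, hkn⟩ < lk) :
    0 ≤ ((k : ℝ) + 1) + (S (k + 1)) ^ 2 - (k + 1) * Q (k + 1) := by
  set b := β ⟨k, hkn⟩ with hb
  have hkpos : (0:ℝ) < k := by exact_mod_cast hk1
  have hmem : (⟨k, hkn⟩ : Fin n) ∉ Finset.univ.filter (fun i : Fin n => (i : ℕ) < k) := by
    simp
  have hins : Finset.univ.filter (fun i : Fin n => (i : ℕ) < k + 1)
      = insert (⟨k, hkn⟩ : Fin n) (Finset.univ.filter (fun i : Fin n => (i : ℕ) < k)) := by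
    ext i
    simp only [Finset.mem_filter, Finset.mem_univ, true_and, Finset.mem_insert, Fin.ext_iff]
    omega
  have hS1 : S (k+1) = S k + b := by
    rw [hS, hS, hins, Finset.sum_insert hmem]; ring
  have hQ1 : Q (k+1) = Q k + b^2 := by
    rw [hQ, hQ, hins, Finset.sum_insert hmem]; ring
  have hcard : (Finset.univ.filter (fun i : Fin n => (i : ℕ) < k)).card = k := by
    have : Finset.univ.filter (fun i : Fin n => (i : ℕ) < k) = Finset.Iio (⟨k, hkn⟩ : Fin n) := by
      ext i; simp [Fin.lt_def]
    rw [this, Fin.card_Iio]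
  have hsb : S k ≤ k * b := by
    rw [hS]
    calc ∑ i ∈ Finset.univ.filter (fun i : Fin n => (i : ℕ) < k), β i
        ≤ ∑ i ∈ Finset.univ.filter (fun i : Fin n => (i : ℕ) < k), b := by
          apply Finset.sum_le_sum
          intro i hi
          apply hβ_sorted
          simp only [Finset.mem_filter] at hi
          exact le_of_lt hi.2
      _ = k * b := by rw [Finset.sum_const, hcard]; simp [mul_comm]
  set D := (k : ℝ) + (S k) ^ 2 - k * Q k with hD
  have hr : Real.sqrt D * Real.sqrt D = D := Real.mul_self_sqrt hdisc
  have hrn : 0 ≤ Real.sqrt D := Real.sqrt_nonneg D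
  have hkb : k * b < S k + Real.sqrt D := by
    rw [hlk] at hloop
    have h2 : b * k < S k + Real.sqrt D := by
      have h3 : b < (S k + Real.sqrt D) / k := by
        rw [div_eq_mul_inv, mul_comm]; rw [one_div] at hloop; exact hloop
      exact (lt_div_iff₀ hkpos).mp h3
    linarith [h2, mul_comm b (k:ℝ)]
  have hsq : (k * b - S k)^2 ≤ D := by
    nlinarith [hkb, hsb, hrn, hr]
  rw [hS1, hQ1]
  nlinarith [hsq, hdisc, hkpos, mul_pos hkpos hkpos]
end
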